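/- arXiv:1607.05050 — 2 statements merged into one kernel-verified Lean document; each statement's English description precedes it below -/
import Mathlib

section
/- Let γ₁, γ₂ ∈ ℝ, let τ ∈ ℂ with Im τ > 0, let ξ ∈ ℂ, and set p = e^{2iπτ} (so 0 < |p| < 1). Then ϑ[γ₁,γ₂](ξ,τ) = e^{2πi γ₁ γ₂} · e^{iπ γ₁² τ} · e^{2πi γ₁ ξ} · Θ_p(−e^{2iπγ₂} · e^{iπ(2γ₁+1)τ} · e^{2iπξ}), i.e. the theta function with characteristics equals (−1)^{2γ₁γ₂} p^{γ₁²/2} z^{2γ₁} Θ_p(−e^{2iπγ₂} p^{γ₁+1/2} z²) with z = e^{iπξ}, where all fractional powers are interpreted as the indicated exponentials. -/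
/-!
With `q = e^{iπτ}` and `x = e^{2iπ(γ₁τ + ξ + γ₂)}`, the series `ϑ[γ₁,γ₂](ξ,τ)` is an explicit
exponential times `Σ_m q^{m²} x^m`, which is Mathlib's `jacobiTheta₂`; so the theorem is the Jacobi
triple product `Σ_m q^{m²} x^m = Θ_{q²}(-xq)`.

Gauss's `q`-binomial theorem, applied to `2N` factors, gives the finite triple product
`∏_{j<N} (1 + x q^{2j+1}) (1 + x⁻¹ q^{2j+1}) = Σ_{|m| ≤ N} [2N, N+m]_{q²} q^{m²} x^m`.
As `N → ∞`, `[2N, N+m]_{q²} = (q²;q²)_{2N} / ((q²;q²)_{N+m} (q²;q²)_{N-m}) → 1 / (q²;q²)_∞`,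
and these coefficients are bounded uniformly in `N` and `m` by their values at the real number `|q|²`, where
the finite products decrease to a positive limit. Tannery's theorem then passes to the limit term
by term.
-/

/-- Jacobi theta function with characteristics:
`ϑ[γ₁,γ₂](ξ,τ) = Σ_{m∈ℤ} exp(iπ(m+γ₁)²τ + 2iπ(m+γ₁)(ξ+γ₂))`. -/
noncomputable def jTheta (γ₁ γ₂ : ℝ) (ξ τ : ℂ) : ℂ :=
  ∑' m : ℤ, Complex.exp (Real.pi * Complex.I * ((m : ℂ) + (γ₁ : ℂ)) ^ 2 * τ
    + 2 * Real.pi * Complex.I * ((m : ℂ) + (γ₁ : ℂ)) * (ξ + (γ₂ : ℂ)))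

/-- Infinite `q`-Pochhammer symbol `(z;p)_∞ = ∏_{j≥0} (1 − z pʲ)`. -/
noncomputable def qPoch (z p : ℂ) : ℂ := ∏' j : ℕ, (1 - z * p ^ j)

/-- Jacobi Θ function `Θ_p(z) = (z;p)_∞ (p z⁻¹;p)_∞ (p;p)_∞`. -/
noncomputable def ThetaF (p z : ℂ) : ℂ := qPoch z p * qPoch (p * z⁻¹) p * qPoch p p

open Finset Filter Topology

section GaussianBinomial

variable {R : Type*} [CommRing R]

def gaussBinom (Q : R) : ℕ → ℕ → R
  | _, 0 => 1
  | 0, _ + 1 => 0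
  | n + 1, k + 1 => gaussBinom Q n (k + 1) + Q ^ (n - k) * gaussBinom Q n k

def qPochFin (z p : R) (n : ℕ) : R := ∏ j ∈ range n, (1 - z * p ^ j)

theorem gaussBinom_eq_zero_of_lt (Q : R) {n k : ℕ} (h : n < k) : gaussBinom Q n k = 0 := by
  induction n generalizing k with
  | zero => obtain ⟨k, rfl⟩ := Nat.exists_eq_add_one_of_ne_zero (by omega : k ≠ 0); rfl
  | succ n ih =>
    obtain ⟨k, rfl⟩ := Nat.exists_eq_add_one_of_ne_zero (by omega : k ≠ 0)
    simp [gaussBinom, ih (by omega : n < k + 1), ih (by omega : n < k)]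

theorem qPochFin_succ (z p : R) (n : ℕ) :
    qPochFin z p (n + 1) = qPochFin z p n * (1 - z * p ^ n) :=
  prod_range_succ _ _

theorem qPochFin_add (z p : R) (m n : ℕ) :
    qPochFin z p (m + n) = qPochFin z p m * qPochFin (z * p ^ m) p n := by
  simp only [qPochFin, prod_range_add, pow_add, mul_assoc]

theorem gaussBinom_mul_qPochFin (Q : R) {n k : ℕ} (h : k ≤ n) :
    gaussBinom Q n k * qPochFin Q Q k * qPochFin Q Q (n - k) = qPochFin Q Q n := by
  induction n generalizing k with
  | zero =>
    obtain rfl : k = 0 := by omega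
    simp [gaussBinom, qPochFin]
  | succ n ih =>
    cases k with
    | zero => simp [gaussBinom, qPochFin]
    | succ k =>
      have hsucc : gaussBinom Q n (k + 1) * qPochFin Q Q (k + 1) * qPochFin Q Q (n - k)
          = qPochFin Q Q n * (1 - Q ^ (n - k)) := by
        rcases Nat.lt_or_ge k n with hk | hk
        · have hnext := ih (k := k + 1) hk
          rw [show n - k = n - (k + 1) + 1 by omega, qPochFin_succ Q Q (n - (k + 1)), ← hnext,
            pow_succ]
          ring
        · simp [gaussBinom_eq_zero_of_lt Q (show n < k + 1 by omega), show n - k = 0 by omega]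
      have hself := ih (k := k) (by omega)
      have hpow : Q ^ (n - k) * (Q * Q ^ k) = Q * Q ^ n := by
        rw [← pow_succ', ← pow_add, ← pow_succ']
        congr 1
        omega
      simp only [gaussBinom, Nat.add_sub_add_right]
      rw [qPochFin_succ Q Q n]
      linear_combination hsucc + Q ^ (n - k) * (1 - Q * Q ^ k) * hself
        + Q ^ (n - k) * gaussBinom Q n k * qPochFin Q Q (n - k) * qPochFin_succ Q Q k
        - qPochFin Q Q n * hpow

theorem qPochFin_neg_eq_sum (Q y : R) (n : ℕ) :
    qPochFin (-y) Q n = ∑ k ∈ range (n + 1), gaussBinom Q n k * Q ^ k.choose 2 * y ^ k := by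
  induction n with
  | zero => simp [qPochFin, gaussBinom]
  | succ n ih =>
    have hshift : ∀ k ∈ range (n + 1),
        Q ^ (n - k) * Q ^ (k + 1).choose 2 = Q ^ k.choose 2 * Q ^ n := by
      intro k hk
      have hk := mem_range.1 hk
      rw [← pow_add, ← pow_add, Nat.choose_two_right, Nat.choose_two_right, Nat.triangle_succ]
      congr 1
      omega
    have hlow : ∑ k ∈ range (n + 1), gaussBinom Q n (k + 1) * Q ^ (k + 1).choose 2 * y ^ (k + 1)
        + 1 = ∑ k ∈ range (n + 1), gaussBinom Q n k * Q ^ k.choose 2 * y ^ k := by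
      rw [sum_range_succ' (fun k ↦ gaussBinom Q n k * Q ^ k.choose 2 * y ^ k), sum_range_succ,
        gaussBinom_eq_zero_of_lt Q (Nat.lt_succ_self n)]
      simp [gaussBinom]
    have hhigh : ∑ k ∈ range (n + 1),
          Q ^ (n - k) * gaussBinom Q n k * Q ^ (k + 1).choose 2 * y ^ (k + 1)
        = (∑ k ∈ range (n + 1), gaussBinom Q n k * Q ^ k.choose 2 * y ^ k) * (y * Q ^ n) := by
      rw [sum_mul]
      refine sum_congr rfl fun k hk ↦ ?_
      linear_combination gaussBinom Q n k * y ^ (k + 1) * hshift k hk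
    rw [qPochFin_succ, ih, sum_range_succ' _ (n + 1)]
    simp only [gaussBinom, add_mul, sum_add_distrib, hhigh, ← hlow, Nat.choose_zero_succ, pow_zero,
      mul_one]
    ring

end GaussianBinomial

theorem prod_range_pow_two_mul_add_one {M : Type*} [CommMonoid M] (q : M) (N : ℕ) :
    ∏ j ∈ range N, q ^ (2 * j + 1) = q ^ (N ^ 2) := by
  induction N with
  | zero => simp
  | succ N ih =>
    rw [prod_range_succ, ih, ← pow_add]
    congr 1
    ring

theorem zpow_mul_sq_pow {K : Type*} [Field K] {q : K} (hq : q ≠ 0) (a : ℤ) (m : ℕ) :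
    q ^ a * (q ^ 2) ^ m = q ^ (a + 2 * m) := by
  rw [← pow_mul, ← zpow_natCast, ← zpow_add₀ hq]
  push_cast
  rfl

section FiniteTripleProduct

variable {K : Type*} [Field K] {q x : K}

theorem qPochFin_neg_mul_zpow_one_sub_two_mul (hq : q ≠ 0) (hx : x ≠ 0) (N : ℕ) :
    qPochFin (-(x * q ^ (1 - 2 * N : ℤ))) (q ^ 2) N
      = x ^ N * (q ^ (N ^ 2))⁻¹ * qPochFin (-(x⁻¹ * q)) (q ^ 2) N := by
  have hfactor : ∀ j ∈ range N, 1 - -(x * q ^ (1 - 2 * N : ℤ)) * (q ^ 2) ^ (N - 1 - j)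
      = x * (q ^ (2 * j + 1))⁻¹ * (1 - -(x⁻¹ * q) * (q ^ 2) ^ j) := by
    intro j hj
    have hj := mem_range.1 hj
    rw [neg_mul, mul_assoc, zpow_mul_sq_pow hq, show 1 - 2 * N + 2 * ((N - 1 - j : ℕ) : ℤ)
      = -((2 * j + 1 : ℕ) : ℤ) by omega, zpow_neg, zpow_natCast]
    field_simp
    ring
  rw [qPochFin, ← prod_range_reflect, prod_congr rfl hfactor, prod_mul_distrib, prod_mul_distrib,
    prod_const, card_range, prod_inv_distrib, prod_range_pow_two_mul_add_one, qPochFin]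

theorem mul_pow_choose_two_mul_pow_eq (hq : q ≠ 0) (hx : x ≠ 0) (N k : ℕ) :
    q ^ (N ^ 2) * x ^ (-(N : ℤ)) * ((q ^ 2) ^ k.choose 2 * (x * q ^ (1 - 2 * N : ℤ)) ^ k)
      = q ^ (((k : ℤ) - N) ^ 2) * x ^ ((k : ℤ) - N) := by
  have hchoose : (2 * k.choose 2 : ℤ) = k ^ 2 - k := by
    qify
    rw [Nat.cast_choose_two]
    ring
  have hqpow : q ^ (N ^ 2) * (q ^ 2) ^ k.choose 2 * (q ^ (1 - 2 * N : ℤ)) ^ k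
      = q ^ (((k : ℤ) - N) ^ 2) := by
    rw [← zpow_natCast, zpow_mul_sq_pow hq, ← zpow_natCast, ← zpow_mul, ← zpow_add₀ hq]
    congr 1
    push_cast
    linear_combination hchoose
  have hxpow : x ^ (-(N : ℤ)) * x ^ k = x ^ ((k : ℤ) - N) := by
    rw [← zpow_natCast, ← zpow_add₀ hx, neg_add_eq_sub]
  rw [← hqpow, ← hxpow]
  ring

theorem finite_jacobi_triple_product (hq : q ≠ 0) (hx : x ≠ 0) (N : ℕ) :
    qPochFin (-(x * q)) (q ^ 2) N * qPochFin (-(x⁻¹ * q)) (q ^ 2) N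
      = ∑ k ∈ range (2 * N + 1),
          gaussBinom (q ^ 2) (2 * N) k * (q ^ (((k : ℤ) - N) ^ 2) * x ^ ((k : ℤ) - N)) := by
  -- Gauss's theorem with `y = x q^{1-2N}`: the upper `N` factors are those of `(-xq; q²)_N`, the
  -- lower ones, reflected, are `x q^{-(2j+1)} (1 + x⁻¹ q^{2j+1})`.
  have hupper : -(x * q ^ (1 - 2 * N : ℤ)) * (q ^ 2) ^ N = -(x * q) := by
    rw [neg_mul, mul_assoc, zpow_mul_sq_pow hq, sub_add_cancel, zpow_one]
  have hsplit := qPochFin_add (-(x * q ^ (1 - 2 * N : ℤ))) (q ^ 2) N N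
  rw [← two_mul, hupper, qPochFin_neg_mul_zpow_one_sub_two_mul hq hx, qPochFin_neg_eq_sum]
    at hsplit
  calc qPochFin (-(x * q)) (q ^ 2) N * qPochFin (-(x⁻¹ * q)) (q ^ 2) N
      = q ^ (N ^ 2) * x ^ (-(N : ℤ)) * ∑ k ∈ range (2 * N + 1),
          gaussBinom (q ^ 2) (2 * N) k * (q ^ 2) ^ k.choose 2 * (x * q ^ (1 - 2 * N : ℤ)) ^ k := by
        rw [hsplit, zpow_neg, zpow_natCast]
        field_simp
    _ = _ := by
        rw [mul_sum]
        refine sum_congr rfl fun k _ ↦ ?_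
        rw [← mul_pow_choose_two_mul_pow_eq hq hx]
        ring

end FiniteTripleProduct

section Analytic

theorem norm_gaussBinom_le {R : Type*} [NormedCommRing R] [NormOneClass R] (Q : R) (n k : ℕ) :
    ‖gaussBinom Q n k‖ ≤ gaussBinom ‖Q‖ n k := by
  induction n generalizing k with
  | zero => cases k <;> simp [gaussBinom]
  | succ n ih =>
    cases k with
    | zero => simp [gaussBinom]
    | succ k =>
      calc ‖gaussBinom Q n (k + 1) + Q ^ (n - k) * gaussBinom Q n k‖
          ≤ ‖gaussBinom Q n (k + 1)‖ + ‖Q ^ (n - k)‖ * ‖gaussBinom Q n k‖ :=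
            (norm_add_le _ _).trans (by gcongr; exact norm_mul_le _ _)
        _ ≤ gaussBinom ‖Q‖ n (k + 1) + ‖Q‖ ^ (n - k) * gaussBinom ‖Q‖ n k := by
            gcongr
            exacts [ih _, norm_pow_le _ _, ih _]

variable {𝕜 : Type*} [NormedField 𝕜]

theorem summable_norm_neg_mul_pow (z : 𝕜) {p : 𝕜} (hp : ‖p‖ < 1) :
    Summable fun j : ℕ ↦ ‖-(z * p ^ j)‖ := by
  simpa only [norm_neg, norm_mul, norm_pow] using
    (summable_geometric_of_lt_one (norm_nonneg p) hp).mul_left ‖z‖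

theorem tendsto_qPochFin [CompleteSpace 𝕜] (z : 𝕜) {p : 𝕜} (hp : ‖p‖ < 1) :
    Tendsto (qPochFin z p) atTop (𝓝 (∏' j, (1 - z * p ^ j))) := by
  unfold qPochFin
  simpa only [← sub_eq_add_neg] using
    (multipliable_one_add_of_summable (summable_norm_neg_mul_pow z hp)).hasProd.tendsto_prod_nat

theorem tprod_one_sub_mul_pow_ne_zero [CompleteSpace 𝕜] {z p : 𝕜} (hp : ‖p‖ < 1)
    (h : ∀ j, 1 - z * p ^ j ≠ 0) : ∏' j, (1 - z * p ^ j) ≠ 0 := by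
  simp only [sub_eq_add_neg] at h ⊢
  exact tprod_one_add_ne_zero_of_summable h (summable_norm_neg_mul_pow z hp)

theorem one_sub_self_mul_pow_ne_zero {p : 𝕜} (hp : ‖p‖ < 1) (j : ℕ) : 1 - p * p ^ j ≠ 0 := by
  rw [sub_ne_zero, ne_comm, ← pow_succ']
  intro h
  have := pow_lt_one₀ (norm_nonneg p) hp (Nat.succ_ne_zero j)
  rw [← norm_pow, h, norm_one] at this
  exact lt_irrefl _ this

end Analytic

section RealBound

variable {t : ℝ}

theorem one_sub_self_mul_pow_nonneg (ht0 : 0 ≤ t) (ht1 : t < 1) (j : ℕ) : 0 ≤ 1 - t * t ^ j := by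
  rw [sub_nonneg, ← pow_succ']
  exact pow_le_one₀ ht0 ht1.le

theorem qPochFin_self_nonneg (ht0 : 0 ≤ t) (ht1 : t < 1) (n : ℕ) : 0 ≤ qPochFin t t n :=
  prod_nonneg fun j _ ↦ one_sub_self_mul_pow_nonneg ht0 ht1 j

theorem tprod_le_qPochFin_self (ht0 : 0 ≤ t) (ht1 : t < 1) (n : ℕ) :
    ∏' j, (1 - t * t ^ j) ≤ qPochFin t t n := by
  refine Antitone.le_of_tendsto (antitone_nat_of_succ_le fun n ↦ ?_)
    (tendsto_qPochFin t (by rwa [Real.norm_of_nonneg ht0])) n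
  rw [qPochFin_succ]
  exact mul_le_of_le_one_right (qPochFin_self_nonneg ht0 ht1 n)
    (sub_le_self _ (by positivity))

theorem tprod_one_sub_self_mul_pow_pos (ht0 : 0 ≤ t) (ht1 : t < 1) :
    0 < ∏' j, (1 - t * t ^ j) := by
  have ht : ‖t‖ < 1 := by rwa [Real.norm_of_nonneg ht0]
  exact lt_of_le_of_ne (ge_of_tendsto' (tendsto_qPochFin t ht) (qPochFin_self_nonneg ht0 ht1))
    (tprod_one_sub_mul_pow_ne_zero ht (one_sub_self_mul_pow_ne_zero ht)).symm

theorem gaussBinom_le_inv_tprod_sq (ht0 : 0 ≤ t) (ht1 : t < 1) (n k : ℕ) :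
    gaussBinom t n k ≤ ((∏' j, (1 - t * t ^ j)) ^ 2)⁻¹ := by
  have hP := tprod_one_sub_self_mul_pow_pos ht0 ht1
  rcases lt_or_ge n k with h | h
  · rw [gaussBinom_eq_zero_of_lt t h]; positivity
  have hk := tprod_le_qPochFin_self ht0 ht1 k
  have hnk := tprod_le_qPochFin_self ht0 ht1 (n - k)
  have hk0 := hP.trans_le hk
  have hnk0 := hP.trans_le hnk
  have hn : qPochFin t t n ≤ 1 :=
    prod_le_one (fun j _ ↦ one_sub_self_mul_pow_nonneg ht0 ht1 j)
      fun j _ ↦ sub_le_self _ (by positivity)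
  rw [eq_div_of_mul_eq (by positivity) ((mul_assoc _ _ _).symm.trans (gaussBinom_mul_qPochFin t h)),
    sq, ← one_div]
  calc qPochFin t t n / (qPochFin t t k * qPochFin t t (n - k))
      ≤ 1 / (qPochFin t t k * qPochFin t t (n - k)) := by gcongr
    _ ≤ 1 / ((∏' j, (1 - t * t ^ j)) * ∏' j, (1 - t * t ^ j)) := by gcongr

end RealBound

section Central

/-- `[2N, N + m]_Q`; the guard is needed because `Int.toNat` sends negative integers to `0`. -/
def gaussBinomCentral {R : Type*} [CommRing R] (Q : R) (N : ℕ) (m : ℤ) : R :=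
  if -(N : ℤ) ≤ m then gaussBinom Q (2 * N) (m + N).toNat else 0

theorem tsum_gaussBinomCentral_mul {R : Type*} [CommRing R] [TopologicalSpace R] (Q : R) (N : ℕ)
    (a : ℤ → R) : ∑' m, gaussBinomCentral Q N m * a m
      = ∑ k ∈ range (2 * N + 1), gaussBinom Q (2 * N) k * a (k - N) := by
  have hcentral : ∀ k : ℕ, gaussBinomCentral Q N (k - N) = gaussBinom Q (2 * N) k := by
    intro k; simp [gaussBinomCentral]
  have hinj : Function.Injective fun k : ℕ ↦ (k : ℤ) - N := fun a b h ↦ by simpa using h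
  rw [← hinj.tsum_eq, tsum_eq_sum (s := range (2 * N + 1))]
  · simp only [hcentral]
  · intro k hk
    rw [hcentral, gaussBinom_eq_zero_of_lt Q (by simpa using hk), zero_mul]
  · intro m hm
    by_cases h : -(N : ℤ) ≤ m
    · exact ⟨(m + N).toNat, by dsimp only; omega⟩
    · simp [gaussBinomCentral, h] at hm

variable {𝕜 : Type*} [NormedField 𝕜] {Q : 𝕜}

theorem norm_gaussBinomCentral_le (hQ : ‖Q‖ < 1) (N : ℕ) (m : ℤ) :
    ‖gaussBinomCentral Q N m‖ ≤ ((∏' j, (1 - ‖Q‖ * ‖Q‖ ^ j)) ^ 2)⁻¹ := by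
  unfold gaussBinomCentral
  split_ifs
  · exact (norm_gaussBinom_le _ _ _).trans (gaussBinom_le_inv_tprod_sq (norm_nonneg Q) hQ _ _)
  · have := tprod_one_sub_self_mul_pow_pos (norm_nonneg Q) hQ
    rw [norm_zero]
    positivity

variable [CompleteSpace 𝕜]

theorem tendsto_gaussBinomCentral (hQ : ‖Q‖ < 1) (m : ℤ) :
    Tendsto (fun N ↦ gaussBinomCentral Q N m) atTop (𝓝 (∏' j, (1 - Q * Q ^ j))⁻¹) := by
  set F := ∏' j, (1 - Q * Q ^ j)
  have hF : F ≠ 0 := tprod_one_sub_mul_pow_ne_zero hQ (one_sub_self_mul_pow_ne_zero hQ)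
  have hfin : ∀ n, qPochFin Q Q n ≠ 0 :=
    fun n ↦ prod_ne_zero_iff.2 fun j _ ↦ one_sub_self_mul_pow_ne_zero hQ j
  have hlim := tendsto_qPochFin Q hQ
  have hshift : ∀ a : ℤ, Tendsto (fun N : ℕ ↦ (a + N).toNat) atTop atTop :=
    fun a ↦ tendsto_atTop_atTop.2 fun b ↦ ⟨b + a.natAbs, fun N hN ↦ by omega⟩
  have htwo : Tendsto (fun N : ℕ ↦ 2 * N) atTop atTop :=
    tendsto_atTop_atTop.2 fun b ↦ ⟨b, fun N hN ↦ by omega⟩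
  have h := ((hlim.comp htwo).mul ((hlim.comp (hshift m)).inv₀ hF)).mul
    ((hlim.comp (hshift (-m))).inv₀ hF)
  rw [mul_inv_cancel₀ hF, one_mul] at h
  refine h.congr' ?_
  filter_upwards [eventually_ge_atTop m.natAbs] with N hN
  have hfactorial := gaussBinom_mul_qPochFin Q (show (m + N).toNat ≤ 2 * N by omega)
  rw [show 2 * N - (m + N).toNat = (-m + N).toNat by omega] at hfactorial
  simp only [Function.comp_apply, gaussBinomCentral, if_pos (show -(N : ℤ) ≤ m by omega),
    ← hfactorial]
  field_simp [hfin]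

theorem tendsto_tsum_gaussBinomCentral_mul (hQ : ‖Q‖ < 1) {a : ℤ → 𝕜}
    (ha : Summable fun m ↦ ‖a m‖) :
    Tendsto (fun N ↦ ∑' m, gaussBinomCentral Q N m * a m) atTop
      (𝓝 ((∏' j, (1 - Q * Q ^ j))⁻¹ * ∑' m, a m)) := by
  rw [← tsum_mul_left]
  refine tendsto_tsum_of_dominated_convergence (ha.mul_left ((∏' j, (1 - ‖Q‖ * ‖Q‖ ^ j)) ^ 2)⁻¹)
    (fun m ↦ (tendsto_gaussBinomCentral hQ m).mul_const (a m))
    (Eventually.of_forall fun N m ↦ ?_)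
  rw [norm_mul]
  gcongr
  exact norm_gaussBinomCentral_le hQ N m

end Central

open Complex Real

theorem jacobiTheta₂_term_eq_zpow (m : ℤ) (z τ : ℂ) :
    jacobiTheta₂_term m z τ = cexp (π * I * τ) ^ (m ^ 2) * cexp (2 * π * I * z) ^ m := by
  rw [jacobiTheta₂_term, ← exp_int_mul, ← exp_int_mul, ← Complex.exp_add]
  congr 1
  push_cast
  ring

theorem norm_exp_pi_mul_I_mul_lt_one {τ : ℂ} (hτ : 0 < τ.im) : ‖cexp (π * I * τ)‖ < 1 := by
  rw [Complex.norm_exp, Real.exp_lt_one_iff]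
  simpa using mul_pos Real.pi_pos hτ

/-- The Jacobi triple product. -/
theorem jacobiTheta₂_eq_ThetaF {z τ : ℂ} (hτ : 0 < τ.im) :
    jacobiTheta₂ z τ
      = ThetaF (cexp (2 * π * I * τ)) (-(cexp (2 * π * I * z) * cexp (π * I * τ))) := by
  set q := cexp (π * I * τ)
  set x := cexp (2 * π * I * z)
  have hq0 : q ≠ 0 := Complex.exp_ne_zero _
  have hx0 : x ≠ 0 := Complex.exp_ne_zero _
  have hQ : ‖q ^ 2‖ < 1 := by
    rw [norm_pow]
    exact pow_lt_one₀ (norm_nonneg q) (norm_exp_pi_mul_I_mul_lt_one hτ) two_ne_zero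
  have hQq : cexp (2 * π * I * τ) = q ^ 2 := by
    rw [← Complex.exp_nat_mul]
    congr 1
    push_cast
    ring
  have hF : ∏' j, (1 - q ^ 2 * (q ^ 2) ^ j) ≠ 0 :=
    tprod_one_sub_mul_pow_ne_zero hQ (one_sub_self_mul_pow_ne_zero hQ)
  have htheta : jacobiTheta₂ z τ = ∑' m : ℤ, q ^ (m ^ 2) * x ^ m :=
    tsum_congr (jacobiTheta₂_term_eq_zpow · z τ)
  have hprod := (tendsto_qPochFin (-(x * q)) hQ).mul (tendsto_qPochFin (-(x⁻¹ * q)) hQ)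
  have hsum := tendsto_tsum_gaussBinomCentral_mul hQ (a := fun m ↦ q ^ (m ^ 2) * x ^ m)
    (by simpa only [jacobiTheta₂_term_eq_zpow] using
      ((summable_jacobiTheta₂_term_iff z τ).2 hτ).norm)
  simp only [tsum_gaussBinomCentral_mul, ← finite_jacobi_triple_product hq0 hx0] at hsum
  rw [hQq, ThetaF, qPoch, qPoch, qPoch, show q ^ 2 * (-(x * q))⁻¹ = -(x⁻¹ * q) by field_simp,
    htheta, tendsto_nhds_unique hprod hsum]
  field_simp [hF]

theorem jTheta_eq_mul_jacobiTheta₂ (γ₁ γ₂ : ℝ) (ξ τ : ℂ) :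
    jTheta γ₁ γ₂ ξ τ = cexp (2 * π * I * γ₁ * γ₂) * cexp (π * I * γ₁ ^ 2 * τ)
      * cexp (2 * π * I * γ₁ * ξ) * jacobiTheta₂ (γ₁ * τ + ξ + γ₂) τ := by
  rw [jTheta, jacobiTheta₂, ← tsum_mul_left]
  congr 1 with m
  simp only [jacobiTheta₂_term, ← Complex.exp_add]
  congr 1
  ring

/-- Expression of the theta function with characteristics in terms of the Jacobi Θ
function: with `p = e^{2iπτ}` and `z = e^{iπξ}`,
`ϑ[γ₁,γ₂](ξ,τ) = (−1)^{2γ₁γ₂} p^{γ₁²/2} z^{2γ₁} Θ_p(−e^{2iπγ₂} p^{γ₁+1/2} z²)`,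
all fractional powers being interpreted as the indicated exponentials. -/
theorem jTheta_eq_ThetaF (γ₁ γ₂ : ℝ) (τ : ℂ) (hτ : 0 < τ.im) (ξ : ℂ) :
    jTheta γ₁ γ₂ ξ τ
      = Complex.exp (2 * Real.pi * Complex.I * (γ₁ : ℂ) * (γ₂ : ℂ))
        * Complex.exp (Real.pi * Complex.I * (γ₁ : ℂ) ^ 2 * τ)
        * Complex.exp (2 * Real.pi * Complex.I * (γ₁ : ℂ) * ξ)
        * ThetaF (Complex.exp (2 * Real.pi * Complex.I * τ))
            (-(Complex.exp (2 * Real.pi * Complex.I * (γ₂ : ℂ))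
              * Complex.exp (Real.pi * Complex.I * (2 * (γ₁ : ℂ) + 1) * τ)
              * Complex.exp (2 * Real.pi * Complex.I * ξ))) := by
  rw [jTheta_eq_mul_jacobiTheta₂, jacobiTheta₂_eq_ThetaF hτ]
  congr 3
  simp only [← Complex.exp_add]
  congr 1
  ring
end

section
/- Let k ≥ 1 be an integer, η ∈ ℝ, and z ∈ ℂ with |z| < 1. For ε > 0 set p = 1 + ε and q = 1 + ηε, and define E_k(z; p, q) = exp( Σ_{ℓ=1}^∞ [(1 − p^{−kℓ})(1 − (p^k q²)^ℓ)/(1 + q^{2ℓ})] · z^ℓ/ℓ ). Then there is ε₀ > 0 such that the series converges absolutely for all 0 < ε < ε₀, and lim_{ε→0⁺} (E_k(z; 1+ε, 1+ηε) − 1)/ε² = −(k(k+2η)/2) · z/(1−z)². -/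
/-- The `ℓ`-th term of the series defining `g^{(k)}`:
`(1 − p^{−kℓ})(1 − (pᵏq²)^ℓ)/(1 + q^{2ℓ}) · z^ℓ/ℓ`. -/
noncomputable def Eterm (k : ℕ) (p q : ℝ) (z : ℂ) (l : ℕ) : ℂ :=
  (1 - (p : ℂ) ^ (-((k : ℤ) * l))) * (1 - ((p : ℂ) ^ k * (q : ℂ) ^ 2) ^ l)
    / (1 + (q : ℂ) ^ (2 * l)) * z ^ l / (l : ℂ)

/-- The structure-function factor
`E_k(z;p,q) = exp( Σ_{ℓ≥1} (1 − p^{−kℓ})(1 − (pᵏq²)^ℓ)/(1 + q^{2ℓ}) · z^ℓ/ℓ )`. -/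
noncomputable def Efun (k : ℕ) (p q : ℝ) (z : ℂ) : ℂ :=
  Complex.exp (∑' l : ℕ, Eterm k p q z (l + 1))


/-!
With `b = p⁻ᵏ` and `a = pᵏq²`, the `ℓ`-th term is `(1 - bˡ)(1 - aˡ)/(1 + q^{2ℓ}) · zˡ/ℓ`.
Along `p = 1 + ε`, `q = 1 + ηε` both `b - 1` and `a - 1` are `O(ε)`, and
`‖xˡ - 1‖ ≤ ℓ ‖x - 1‖ (1 + ‖x - 1‖)ˡ` turns this into a bound `ε² · C ℓ rˡ` with `‖z‖ < r < 1`,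
uniform in `ℓ`. This gives absolute convergence, and by dominated convergence the sum `S(ε)`
of the series satisfies `S(ε)/ε² → Σ (kℓ)(-ℓ(k + 2η))/(2ℓ) · zˡ = -(k(k + 2η)/2) · z/(1 - z)²`,
each factor `1 - xˡ` contributing its derivative at `ε = 0`. Finally `exp S - 1 = S + O(S²)`
and `S = O(ε²)`.
-/

open Filter Topology

theorem norm_pow_sub_one_le {R : Type*} [NormedRing R] [NormOneClass R] (x : R) (n : ℕ) :
    ‖x ^ n - 1‖ ≤ n * ‖x - 1‖ * (1 + ‖x - 1‖) ^ n := by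
  have hx : ‖x‖ ≤ 1 + ‖x - 1‖ := by
    simpa [add_comm] using norm_add_le (x - 1) 1
  have hgeom : ‖∑ i ∈ Finset.range n, x ^ i‖ ≤ n * (1 + ‖x - 1‖) ^ n := by
    calc ‖∑ i ∈ Finset.range n, x ^ i‖ ≤ ∑ i ∈ Finset.range n, ‖x‖ ^ i :=
          norm_sum_le_of_le _ fun i _ => norm_pow_le x i
      _ ≤ ∑ _i ∈ Finset.range n, (1 + ‖x - 1‖) ^ n := Finset.sum_le_sum fun i hi =>
          (pow_le_pow_left₀ (norm_nonneg x) hx i).trans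
            (pow_le_pow_right₀ (by simp) (Finset.mem_range.mp hi).le)
      _ = n * (1 + ‖x - 1‖) ^ n := by simp
  calc ‖x ^ n - 1‖ = ‖(∑ i ∈ Finset.range n, x ^ i) * (x - 1)‖ := by rw [geom_sum_mul]
    _ ≤ ‖∑ i ∈ Finset.range n, x ^ i‖ * ‖x - 1‖ := norm_mul_le _ _
    _ ≤ n * (1 + ‖x - 1‖) ^ n * ‖x - 1‖ := by gcongr
    _ = n * ‖x - 1‖ * (1 + ‖x - 1‖) ^ n := by ring

theorem tendsto_mul_div_sq_of_hasDerivAt {f g : ℝ → ℂ} {f' g' : ℂ} (hf : HasDerivAt f f' 0)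
    (hg : HasDerivAt g g' 0) (hf0 : f 0 = 0) (hg0 : g 0 = 0) :
    Tendsto (fun t : ℝ => f t * g t / (t : ℂ) ^ 2) (𝓝[≠] 0) (𝓝 (f' * g')) := by
  have hf' := hasDerivAt_iff_tendsto_slope_zero.mp hf
  have hg' := hasDerivAt_iff_tendsto_slope_zero.mp hg
  simp only [zero_add, hf0, hg0, sub_zero, Complex.real_smul] at hf' hg'
  refine (hf'.mul hg').congr fun t => ?_
  push_cast
  ring

theorem tendsto_exp_sub_one_div_of_tendsto_div {α : Type*} {l : Filter α} {S g : α → ℂ}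
    {L : ℂ} (hg : Tendsto g l (𝓝 0)) (hg0 : ∀ᶠ x in l, g x ≠ 0)
    (hS : Tendsto (fun x => S x / g x) l (𝓝 L)) :
    Tendsto (fun x => (Complex.exp (S x) - 1) / g x) l (𝓝 L) := by
  have hS0 : Tendsto S l (𝓝 0) := by
    refine (mul_zero L ▸ hS.mul hg).congr' ?_
    filter_upwards [hg0] with x hx
    exact div_mul_cancel₀ _ hx
  have hrem : Tendsto (fun x => (Complex.exp (S x) - 1 - S x) / g x) l (𝓝 0) := by
    refine squeeze_zero_norm' ?_ (by simpa using hS.norm.mul hS0.norm)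
    filter_upwards [(tendsto_order.1 hS0.norm).2 1 (by norm_num)] with x hx
    rw [norm_div, div_mul_eq_mul_div, ← sq]
    exact div_le_div_of_nonneg_right (Complex.norm_exp_sub_one_sub_id_le hx.le)
      (norm_nonneg (g x))
  simpa using (hS.add hrem).congr fun x => by ring

theorem hasDerivAt_one_add_zpow_neg (k : ℕ) :
    HasDerivAt (fun ε : ℝ => ((1 + ε : ℝ) : ℂ) ^ (-(k : ℤ))) (-k) 0 := by
  have h : HasDerivAt (fun w : ℂ => (1 + w) ^ (-(k : ℤ))) (-k) ((0 : ℝ) : ℂ) := by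
    simpa [Function.comp_def] using (hasDerivAt_zpow (-(k : ℤ)) (1 + 0 : ℂ) (by simp)).comp _
      ((hasDerivAt_id (0 : ℂ)).const_add 1)
  simpa using h.comp_ofReal

theorem hasDerivAt_one_add_pow_mul_sq (k : ℕ) (η : ℝ) :
    HasDerivAt (fun ε : ℝ => ((1 + ε : ℝ) : ℂ) ^ k * ((1 + η * ε : ℝ) : ℂ) ^ 2)
      ((k : ℂ) + 2 * η) 0 := by
  have h : HasDerivAt (fun w : ℂ => (1 + w) ^ k * (1 + (η : ℂ) * w) ^ 2) ((k : ℂ) + 2 * η)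
      ((0 : ℝ) : ℂ) := by
    simpa using (((hasDerivAt_id (0 : ℂ)).const_add 1).fun_pow k).fun_mul
      ((((hasDerivAt_id (0 : ℂ)).const_mul (η : ℂ)).const_add 1).fun_pow 2)
  simpa using h.comp_ofReal

theorem Eterm_eq_one_sub_pow (k : ℕ) (p q : ℝ) (z : ℂ) (m : ℕ) :
    Eterm k p q z m = (1 - ((p : ℂ) ^ (-(k : ℤ))) ^ m) * (1 - ((p : ℂ) ^ k * (q : ℂ) ^ 2) ^ m)
      / (1 + ((q ^ 2 : ℝ) : ℂ) ^ m) * z ^ m / m := by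
  have hp : (p : ℂ) ^ (-((k : ℤ) * m)) = ((p : ℂ) ^ (-(k : ℤ))) ^ m := by
    rw [← zpow_natCast, ← zpow_mul, neg_mul]
  have hq : (q : ℂ) ^ (2 * m) = ((q ^ 2 : ℝ) : ℂ) ^ m := by push_cast; ring
  rw [Eterm, hp, hq]

theorem norm_Eterm_le (k : ℕ) (p q : ℝ) (z : ℂ) (m : ℕ) :
    ‖Eterm k p q z m‖ ≤ m * ‖(p : ℂ) ^ (-(k : ℤ)) - 1‖ * ‖(p : ℂ) ^ k * (q : ℂ) ^ 2 - 1‖ *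
      ((1 + ‖(p : ℂ) ^ (-(k : ℤ)) - 1‖) * (1 + ‖(p : ℂ) ^ k * (q : ℂ) ^ 2 - 1‖) * ‖z‖) ^ m := by
  set b := (p : ℂ) ^ (-(k : ℤ))
  set a := (p : ℂ) ^ k * (q : ℂ) ^ 2
  have hden : 1 ≤ ‖1 + ((q ^ 2 : ℝ) : ℂ) ^ m‖ := by
    rw [← Complex.ofReal_pow, ← Complex.ofReal_one, ← Complex.ofReal_add, Complex.norm_real,
      Real.norm_of_nonneg (by positivity)]
    exact le_add_of_nonneg_right (by positivity)
  rw [Eterm_eq_one_sub_pow, norm_div, norm_mul, norm_div, norm_mul, Complex.norm_natCast,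
    norm_pow, norm_sub_rev 1, norm_sub_rev 1]
  refine div_le_of_le_mul₀ m.cast_nonneg (by positivity) ?_
  calc ‖b ^ m - 1‖ * ‖a ^ m - 1‖ / ‖1 + ((q ^ 2 : ℝ) : ℂ) ^ m‖ * ‖z‖ ^ m
      ≤ ‖b ^ m - 1‖ * ‖a ^ m - 1‖ * ‖z‖ ^ m := by
        gcongr
        exact div_le_self (by positivity) hden
    _ ≤ (m * ‖b - 1‖ * (1 + ‖b - 1‖) ^ m) * (m * ‖a - 1‖ * (1 + ‖a - 1‖) ^ m) * ‖z‖ ^ m := by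
        gcongr <;> exact norm_pow_sub_one_le _ _
    _ = _ := by rw [mul_pow, mul_pow]; ring

theorem tendsto_Eterm_div_sq (k : ℕ) (η : ℝ) (z : ℂ) {m : ℕ} (hm : m ≠ 0) :
    Tendsto (fun ε : ℝ => Eterm k (1 + ε) (1 + η * ε) z m / (ε : ℂ) ^ 2) (𝓝[≠] 0)
      (𝓝 (-((k : ℂ) * (k + 2 * η) / 2) * (m * z ^ m))) := by
  have hnum := tendsto_mul_div_sq_of_hasDerivAt
    (((hasDerivAt_one_add_zpow_neg k).fun_pow m).const_sub 1)
    (((hasDerivAt_one_add_pow_mul_sq k η).fun_pow m).const_sub 1) (by simp) (by simp)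
  have hrest : Tendsto (fun ε : ℝ => z ^ m / m / (1 + (((1 + η * ε) ^ 2 : ℝ) : ℂ) ^ m))
      (𝓝[≠] 0) (𝓝 (z ^ m / m / 2)) := by
    have hcont :
        Continuous (fun ε : ℝ => z ^ m / m / (1 + (((1 + η * ε) ^ 2 : ℝ) : ℂ) ^ m)) := by
      refine continuous_const.div (by fun_prop) fun ε => ?_
      exact_mod_cast (by positivity : (0 : ℝ) < 1 + ((1 + η * ε) ^ 2) ^ m).ne'
    simpa [one_add_one_eq_two] using (hcont.tendsto 0).mono_left nhdsWithin_le_nhds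
  convert hnum.mul hrest using 2 with ε
  · rw [Eterm_eq_one_sub_pow]
    ring
  · simp
    field_simp

theorem exists_summable_bound_Eterm (k : ℕ) (η : ℝ) {z : ℂ} (hz : ‖z‖ < 1) :
    ∃ B : ℕ → ℝ, Summable B ∧
      ∀ᶠ ε in 𝓝 0, ∀ l, ‖Eterm k (1 + ε) (1 + η * ε) z (l + 1)‖ ≤ ε ^ 2 * B l := by
  have hb := hasDerivAt_one_add_zpow_neg k
  have ha := hasDerivAt_one_add_pow_mul_sq k η
  obtain ⟨cb, hcb, hb'⟩ := hb.isBigO_sub.exists_pos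
  obtain ⟨ca, hca, ha'⟩ := ha.isBigO_sub.exists_pos
  simp only [mul_zero, add_zero, Complex.ofReal_one, one_zpow, one_pow, mul_one, sub_zero]
    at hb' ha'
  obtain ⟨r, hzr, hr⟩ := exists_between hz
  have hlim : Tendsto (fun ε : ℝ => (1 + ‖((1 + ε : ℝ) : ℂ) ^ (-(k : ℤ)) - 1‖) *
      (1 + ‖((1 + ε : ℝ) : ℂ) ^ k * ((1 + η * ε : ℝ) : ℂ) ^ 2 - 1‖) * ‖z‖) (𝓝 0) (𝓝 ‖z‖) := by
    have hb0 := (hb.continuousAt.tendsto.sub_const 1).norm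
    have ha0 := (ha.continuousAt.tendsto.sub_const 1).norm
    simpa using ((hb0.const_add 1).mul (ha0.const_add 1)).mul_const ‖z‖
  refine ⟨fun l => cb * ca * ((l + 1 : ℕ) * r ^ (l + 1)), ?_, ?_⟩
  · have hgeom := summable_pow_mul_geometric_of_norm_lt_one 1
      (by rwa [Real.norm_of_nonneg ((norm_nonneg z).trans hzr.le)] : ‖r‖ < 1)
    simpa using ((summable_nat_add_iff 1).mpr hgeom).mul_left (cb * ca)
  filter_upwards [hb'.bound, ha'.bound, hlim.eventually (ge_mem_nhds hzr)]
    with ε hbε haε hrε l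
  calc ‖Eterm k (1 + ε) (1 + η * ε) z (l + 1)‖
      ≤ (l + 1 : ℕ) * ‖((1 + ε : ℝ) : ℂ) ^ (-(k : ℤ)) - 1‖ *
          ‖((1 + ε : ℝ) : ℂ) ^ k * ((1 + η * ε : ℝ) : ℂ) ^ 2 - 1‖ *
          ((1 + ‖((1 + ε : ℝ) : ℂ) ^ (-(k : ℤ)) - 1‖) *
            (1 + ‖((1 + ε : ℝ) : ℂ) ^ k * ((1 + η * ε : ℝ) : ℂ) ^ 2 - 1‖) * ‖z‖) ^ (l + 1) :=
        norm_Eterm_le k _ _ z (l + 1)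
    _ ≤ (l + 1 : ℕ) * (cb * ‖ε‖) * (ca * ‖ε‖) * r ^ (l + 1) := by gcongr
    _ = ε ^ 2 * (cb * ca * ((l + 1 : ℕ) * r ^ (l + 1))) := by
        rw [Real.norm_eq_abs, ← sq_abs ε]
        ring

theorem tendsto_tsum_Eterm_div_sq (k : ℕ) (η : ℝ) {z : ℂ} (hz : ‖z‖ < 1) :
    Tendsto (fun ε : ℝ => (∑' l : ℕ, Eterm k (1 + ε) (1 + η * ε) z (l + 1)) / (ε : ℂ) ^ 2)
      (𝓝[≠] 0) (𝓝 (-((k : ℂ) * (k + 2 * η) / 2) * (z / (1 - z) ^ 2))) := by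
  obtain ⟨B, hB, hbound⟩ := exists_summable_bound_Eterm k η hz
  have hsum : HasSum (fun l : ℕ => ((l + 1 : ℕ) : ℂ) * z ^ (l + 1)) (z / (1 - z) ^ 2) := by
    simpa only [Finset.sum_range_one, Nat.cast_zero, zero_mul, sub_zero] using
      (hasSum_nat_add_iff' (f := fun n : ℕ => (n : ℂ) * z ^ n) 1).mpr
        (hasSum_coe_mul_geometric_of_norm_lt_one hz)
  rw [← (hsum.mul_left _).tsum_eq]
  simp_rw [← tsum_div_const]
  refine tendsto_tsum_of_dominated_convergence hB
    (fun l => tendsto_Eterm_div_sq k η z l.succ_ne_zero) ?_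
  filter_upwards [nhdsWithin_le_nhds hbound, self_mem_nhdsWithin] with ε hε hε0 l
  rw [norm_div, norm_pow, Complex.norm_real, Real.norm_eq_abs, sq_abs,
    div_le_iff₀ (pow_two_pos_of_ne_zero hε0)]
  exact (hε l).trans_eq (mul_comm _ _)

theorem scaling_limit_gk_general (k : ℕ) (η : ℝ) (z : ℂ)
    (hz : ‖z‖ < 1) :
    ∃ ε₀ : ℝ, 0 < ε₀ ∧
      (∀ ε : ℝ, 0 < ε → ε < ε₀ →
        Summable (fun l : ℕ => ‖Eterm k (1 + ε) (1 + η * ε) z (l + 1)‖)) ∧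
      Filter.Tendsto
        (fun ε : ℝ => (Efun k (1 + ε) (1 + η * ε) z - 1) / (ε : ℂ) ^ 2)
        (nhdsWithin 0 (Set.Ioi 0))
        (nhds (-(((k : ℂ) * ((k : ℂ) + 2 * (η : ℂ))) / 2) * (z / (1 - z) ^ 2))) := by
  obtain ⟨B, hB, hbound⟩ := exists_summable_bound_Eterm k η hz
  obtain ⟨ε₀, hε₀, hsmall⟩ := Metric.eventually_nhds_iff.mp hbound
  refine ⟨ε₀, hε₀, fun ε hε hεε₀ => ?_, ?_⟩
  · refine Summable.of_nonneg_of_le (fun l => norm_nonneg _) (hsmall ?_) (hB.mul_left (ε ^ 2))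
    rwa [Real.dist_0_eq_abs, abs_of_pos hε]
  · have hsq : Tendsto (fun ε : ℝ => (ε : ℂ) ^ 2) (𝓝[>] 0) (𝓝 0) := by
      simpa using ((Complex.continuous_ofReal.tendsto 0).pow 2).mono_left nhdsWithin_le_nhds
    refine tendsto_exp_sub_one_div_of_tendsto_div hsq ?_
      ((tendsto_tsum_Eterm_div_sq k η hz).mono_left (nhdsGT_le_nhdsNE 0))
    filter_upwards [self_mem_nhdsWithin] with ε hε
    exact pow_ne_zero 2 (Complex.ofReal_ne_zero.mpr (ne_of_gt hε))

/-- Scaling limit of `g^{(k)}`: with `p = 1 + ε`, `q = 1 + ηε`, the series converges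
absolutely for small `ε > 0` and
`lim_{ε→0⁺} (E_k(z;1+ε,1+ηε) − 1)/ε² = −(k(k+2η)/2) · z/(1−z)²`. -/
theorem scaling_limit_gk (k : ℕ) (hk : 1 ≤ k) (η : ℝ) (z : ℂ)
    (hz : ‖z‖ < 1) :
    ∃ ε₀ : ℝ, 0 < ε₀ ∧
      (∀ ε : ℝ, 0 < ε → ε < ε₀ →
        Summable (fun l : ℕ => ‖Eterm k (1 + ε) (1 + η * ε) z (l + 1)‖)) ∧
      Filter.Tendsto
        (fun ε : ℝ => (Efun k (1 + ε) (1 + η * ε) z - 1) / (ε : ℂ) ^ 2)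
        (nhdsWithin 0 (Set.Ioi 0))
        (nhds (-(((k : ℂ) * ((k : ℂ) + 2 * (η : ℂ))) / 2) * (z / (1 - z) ^ 2))) :=
  scaling_limit_gk_general k η z hz
end
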